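/- arXiv:1507.07260 — 3 statements merged into one kernel-verified Lean document; each statement's English description precedes it below -/
import Mathlib

section
/- Let A and B be real symmetric n×n matrices with eigenvalues λ₁ ≥ ⋯ ≥ λₙ and μ₁ ≥ ⋯ ≥ μₙ respectively. Then ∑ᵢ (λᵢ - μᵢ)² ≤ ‖A - B‖_F², where ‖·‖_F is the Frobenius norm. -/
/-!
Diagonalize `A = U diag(α) Uᵀ` and `B = V diag(β) Vᵀ` with orthogonal `U`, `V`. Since the
Frobenius norm is orthogonally invariant, `W = Uᵀ V` gives
`‖A - B‖_F² = ‖diag(α) W - W diag(β)‖_F² = ∑ᵢⱼ (αᵢ - βⱼ)² Wᵢⱼ²`, and `(Wᵢⱼ²)` is doubly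
stochastic. By Birkhoff's theorem a linear functional is minimized over doubly stochastic
matrices at a permutation matrix, and by the rearrangement inequality
`∑ᵢ (αᵢ - β_{π i})²` is minimized over permutations `π` when both sequences are sorted alike.
-/

open Finset Matrix

variable {ι R : Type*} [Fintype ι]

theorem Monovary.sum_sq_sub_le_sum_sq_sub_comp_perm [CommRing R] [LinearOrder R]
    [IsStrictOrderedRing R] {f g : ι → R} (hfg : Monovary f g) (σ : Equiv.Perm ι) :
    ∑ i, (f i - g i) ^ 2 ≤ ∑ i, (f i - g (σ i)) ^ 2 := by
  have expand (h : ι → R) :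
      ∑ i, (f i - h i) ^ 2 = ∑ i, f i ^ 2 + ∑ i, h i ^ 2 - 2 * ∑ i, f i * h i := by
    simp only [mul_sum, ← sum_add_distrib, ← sum_sub_distrib]
    exact sum_congr rfl fun i _ => by ring
  rw [expand g, expand (fun i => g (σ i))]
  have := hfg.sum_mul_comp_perm_le_sum_mul (σ := σ)
  have := Equiv.sum_comp σ (fun i => g i ^ 2)
  linarith

theorem le_sum_mul_of_mem_doublyStochastic [Field R] [LinearOrder R] [IsStrictOrderedRing R]
    [DecidableEq ι] (c : Matrix ι ι R) {m : R} (hc : ∀ σ : Equiv.Perm ι, m ≤ ∑ i, c i (σ i))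
    {S : Matrix ι ι R} (hS : S ∈ doublyStochastic R ι) :
    m ≤ ∑ i, ∑ j, c i j * S i j := by
  have hS' : S ∈ (doublyStochastic R ι : Set (Matrix ι ι R)) := hS
  rw [doublyStochastic_eq_convexHull_permMatrix] at hS'
  refine convexHull_min (t := {M : Matrix ι ι R | m ≤ ∑ i, ∑ j, c i j * M i j}) ?_
    (convex_halfSpace_ge ?_ m) hS'
  · rintro _ ⟨σ, rfl⟩
    simpa [Equiv.Perm.permMatrix, PEquiv.toMatrix_apply] using hc σ
  · constructor
    · simp [mul_add, sum_add_distrib]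
    · simp [mul_sum, mul_left_comm]

theorem Matrix.sq_apply_mem_doublyStochastic [DecidableEq ι] {U : Matrix ι ι ℝ}
    (hU : U ∈ unitaryGroup ι ℝ) : of (fun i j => U i j ^ 2) ∈ doublyStochastic ℝ ι := by
  rw [mem_doublyStochastic_iff_sum]
  refine ⟨fun i j => sq_nonneg (U i j), fun i => ?_, fun j => ?_⟩
  · simpa [mul_apply, sq] using congr_fun₂ (mem_unitaryGroup_iff.mp hU) i i
  · simpa [mul_apply, sq] using congr_fun₂ (mem_unitaryGroup_iff'.mp hU) j j

theorem Matrix.sum_sq_apply_eq_trace_mul_transpose {m n : Type*} [Fintype m] [Fintype n]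
    [CommSemiring R] (M : Matrix m n R) : ∑ i, ∑ j, M i j ^ 2 = trace (M * Mᵀ) := by
  simp [trace, mul_apply, sq]

theorem Matrix.sum_sq_apply_unitary_mul_mul_unitary [DecidableEq ι] {U V : Matrix ι ι ℝ}
    (hU : U ∈ unitaryGroup ι ℝ) (hV : V ∈ unitaryGroup ι ℝ) (M : Matrix ι ι ℝ) :
    ∑ i, ∑ j, (U * M * V) i j ^ 2 = ∑ i, ∑ j, M i j ^ 2 := by
  have hU' : Uᵀ * U = 1 := mem_unitaryGroup_iff'.mp hU
  have hV' : V * Vᵀ = 1 := mem_unitaryGroup_iff.mp hV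
  rw [sum_sq_apply_eq_trace_mul_transpose, sum_sq_apply_eq_trace_mul_transpose,
    transpose_mul, transpose_mul]
  calc trace (U * M * V * (Vᵀ * (Mᵀ * Uᵀ))) = trace (U * (M * (V * Vᵀ) * Mᵀ) * Uᵀ) := by
        simp only [Matrix.mul_assoc]
    _ = trace (M * Mᵀ) := by rw [trace_mul_cycle, hU', hV', Matrix.mul_one, Matrix.one_mul]

theorem Matrix.IsHermitian.eq_eigenvectorUnitary_mul_diagonal_mul_star [DecidableEq ι]
    {A : Matrix ι ι ℝ} (hA : A.IsHermitian) :
    A = hA.eigenvectorUnitary * diagonal hA.eigenvalues *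
      star (hA.eigenvectorUnitary : Matrix ι ι ℝ) := by
  simpa using hA.spectral_theorem

theorem Matrix.sum_sq_sub_eq_of_eq_unitary_mul_diagonal_mul_star [DecidableEq ι]
    {A B U V : Matrix ι ι ℝ} {a b : ι → ℝ} (hU : U ∈ unitaryGroup ι ℝ) (hV : V ∈ unitaryGroup ι ℝ)
    (hA : A = U * diagonal a * star U) (hB : B = V * diagonal b * star V) :
    ∑ i, ∑ j, (A i j - B i j) ^ 2 = ∑ i, ∑ j, (a i - b j) ^ 2 * (star U * V) i j ^ 2 := by
  have hconj : star U * (A - B) * V = diagonal a * (star U * V) - (star U * V) * diagonal b := by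
    subst hA hB
    simp only [Matrix.mul_sub, Matrix.sub_mul, Matrix.mul_assoc,
      Unitary.star_mul_self_of_mem hV, Matrix.mul_one]
    simp only [← Matrix.mul_assoc, Unitary.star_mul_self_of_mem hU, Matrix.one_mul]
  calc ∑ i, ∑ j, (A i j - B i j) ^ 2 = ∑ i, ∑ j, (star U * (A - B) * V) i j ^ 2 :=
        (sum_sq_apply_unitary_mul_mul_unitary (Unitary.star_mem hU) hV (A - B)).symm
    _ = ∑ i, ∑ j, (a i - b j) ^ 2 * (star U * V) i j ^ 2 := by
        simp only [hconj, sub_apply, diagonal_mul, mul_diagonal]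
        exact sum_congr rfl fun i _ => sum_congr rfl fun j _ => by ring

/-- Hoffman–Wielandt inequality for real symmetric matrices, for the
decreasingly-ordered eigenvalue sequences. -/
theorem hoffman_wielandt (n : ℕ) (A B : Matrix (Fin n) (Fin n) ℝ)
    (hA : A.IsHermitian) (hB : B.IsHermitian)
    (lam mu : Fin n → ℝ) (hlam : Antitone lam) (hmu : Antitone mu)
    (hlamA : ∃ σ : Equiv.Perm (Fin n), lam = hA.eigenvalues ∘ σ)
    (hmuB : ∃ σ : Equiv.Perm (Fin n), mu = hB.eigenvalues ∘ σ) :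
    ∑ i, (lam i - mu i) ^ 2 ≤ ∑ i, ∑ j, (A i j - B i j) ^ 2 := by
  obtain ⟨σ, rfl⟩ := hlamA
  obtain ⟨τ, rfl⟩ := hmuB
  have hU := hA.eigenvectorUnitary.2
  have hV := hB.eigenvectorUnitary.2
  rw [sum_sq_sub_eq_of_eq_unitary_mul_diagonal_mul_star hU hV
    hA.eq_eigenvectorUnitary_mul_diagonal_mul_star hB.eq_eigenvectorUnitary_mul_diagonal_mul_star]
  refine le_sum_mul_of_mem_doublyStochastic _ (fun π => ?_)
    (sq_apply_mem_doublyStochastic (mul_mem (Unitary.star_mem hU) hV))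
  calc ∑ i, (hA.eigenvalues (σ i) - hB.eigenvalues (τ i)) ^ 2
      ≤ ∑ i, (hA.eigenvalues (σ i) - hB.eigenvalues (τ ((τ⁻¹ * π * σ) i))) ^ 2 :=
        (hlam.monovary hmu).sum_sq_sub_le_sum_sq_sub_comp_perm _
    _ = ∑ i, (hA.eigenvalues i - hB.eigenvalues (π i)) ^ 2 := by
        simpa using Equiv.sum_comp σ (fun i => (hA.eigenvalues i - hB.eigenvalues (π i)) ^ 2)
end

section
/- Let A and B be self-adjoint Hilbert–Schmidt operators on a separable Hilbert space H, where A is positive with simple eigenvalues λ₁ > λ₂ > ⋯, and let D be such that λ_D > 0, with δ_D = (λ_D - λ_{D+1})/2. If ‖A - B‖_HS < δ_D/2, then the orthogonal projections P^D(A) and P^D(B) onto the span of the top D eigenvectors of A and B respectively satisfy ‖P^D(A) - P^D(B)‖_HS ≤ ‖A - B‖_HS / δ_D. -/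
open scoped InnerProductSpace

/-- Squared Hilbert–Schmidt norm of an operator with respect to a Hilbert basis. -/
noncomputable def hsNormSq {ι : Type*} {H : Type*} [NormedAddCommGroup H]
    [InnerProductSpace ℝ H] (b : HilbertBasis ι ℝ H) (T : H →L[ℝ] H) : ℝ :=
  ∑' i, ‖T (b i)‖ ^ 2

open scoped ENNReal

section ZBHelpers

variable {H : Type*} [NormedAddCommGroup H] [InnerProductSpace ℝ H] [CompleteSpace H]

/-- Parseval identity for a real Hilbert basis. -/
lemma zb_parseval (v : HilbertBasis ℕ ℝ H) (x : H) :
    HasSum (fun j => ⟪x, v j⟫_ℝ ^ 2) (‖x‖ ^ 2) := by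
  have h := v.hasSum_inner_mul_inner x x
  rw [real_inner_self_eq_norm_sq] at h
  have e : (fun j => ⟪x, v j⟫_ℝ ^ 2) = fun j => ⟪x, v j⟫_ℝ * ⟪v j, x⟫_ℝ := by
    funext j; rw [sq, real_inner_comm x (v j)]
  rw [e]; exact h

lemma zb_parseval_ennreal (v : HilbertBasis ℕ ℝ H) (x : H) :
    ∑' j, ENNReal.ofReal (⟪x, v j⟫_ℝ ^ 2) = ENNReal.ofReal (‖x‖ ^ 2) := by
  rw [← ENNReal.ofReal_tsum_of_nonneg (fun n => sq_nonneg _) (zb_parseval v x).summable,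
    (zb_parseval v x).tsum_eq]

/-- The ENNReal-valued squared HS norm. -/
noncomputable def zbE (v : HilbertBasis ℕ ℝ H) (T : H →L[ℝ] H) : ℝ≥0∞ :=
  ∑' i, ENNReal.ofReal (‖T (v i)‖ ^ 2)

lemma zbE_eq_double (v v' : HilbertBasis ℕ ℝ H) (T : H →L[ℝ] H) :
    zbE v T = ∑' i, ∑' j, ENNReal.ofReal (⟪T (v i), v' j⟫_ℝ ^ 2) :=
  tsum_congr fun i => (zb_parseval_ennreal v' (T (v i))).symm

/-- Basis independence of the HS norm for symmetric operators. -/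
lemma zbE_indep (T : H →L[ℝ] H) (hT : ∀ x y, ⟪T x, y⟫_ℝ = ⟪x, T y⟫_ℝ)
    (v v' : HilbertBasis ℕ ℝ H) : zbE v T = zbE v' T := by
  rw [zbE_eq_double v v' T, zbE_eq_double v' v T, ENNReal.tsum_comm]
  congr 1; ext j; congr 1; ext i
  rw [hT (v i) (v' j), real_inner_comm]

/-- Formula for the orthogonal projection onto the span of the first `D` basis vectors. -/
lemma zb_proj_eq (v : HilbertBasis ℕ ℝ H) (D : ℕ) (P : H →L[ℝ] H)
    (h1 : ∀ f, P f ∈ Submodule.span ℝ (Set.range fun i : Fin D => v (i : ℕ)))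
    (h2 : ∀ f, ∀ g ∈ Submodule.span ℝ (Set.range fun i : Fin D => v (i : ℕ)),
      ⟪f - P f, g⟫_ℝ = 0) (f : H) :
    P f = ∑ i ∈ Finset.range D, ⟪f, v i⟫_ℝ • v i := by
  classical
  set K := Submodule.span ℝ (Set.range fun i : Fin D => v (i : ℕ)) with hK
  set Q : H := ∑ i ∈ Finset.range D, ⟪f, v i⟫_ℝ • v i with hQ
  have hQK : Q ∈ K := by
    apply Submodule.sum_mem
    intro i hi
    exact Submodule.smul_mem _ _ (Submodule.subset_span ⟨⟨i, Finset.mem_range.mp hi⟩, rfl⟩)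
  have hgen : ∀ i : Fin D, ⟪f - Q, v (i : ℕ)⟫_ℝ = 0 := by
    intro i
    rw [inner_sub_left, hQ, sum_inner]
    have : ∀ k ∈ Finset.range D,
        ⟪⟪f, v k⟫_ℝ • v k, v (i : ℕ)⟫_ℝ = if k = (i : ℕ) then ⟪f, v (i : ℕ)⟫_ℝ else 0 := by
      intro k _
      rw [real_inner_smul_left, orthonormal_iff_ite.mp v.orthonormal]
      split <;> rename_i h <;> simp [h]
    rw [Finset.sum_congr rfl this, Finset.sum_ite_eq' (Finset.range D) (i : ℕ)]
    simp [i.2]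
  have horth : ∀ g ∈ K, ⟪f - Q, g⟫_ℝ = 0 := by
    intro g hg
    induction hg using Submodule.span_induction with
    | mem x hx => obtain ⟨i, rfl⟩ := hx; exact hgen i
    | zero => simp
    | add x y _ _ hx hy => rw [inner_add_right, hx, hy, add_zero]
    | smul c x _ hx => rw [real_inner_smul_right, hx, mul_zero]
  have hd : P f - Q ∈ K := Submodule.sub_mem _ (h1 f) hQK
  have hzero : ⟪P f - Q, P f - Q⟫_ℝ = 0 := by
    have e : (f - Q) - (f - P f) = P f - Q := by abel
    have e2 : ⟪P f - Q, P f - Q⟫_ℝ = ⟪(f - Q) - (f - P f), P f - Q⟫_ℝ := by rw [e]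
    rw [e2, inner_sub_left, horth _ hd, h2 f _ hd, sub_zero]
  have := inner_self_eq_zero.mp hzero
  rw [sub_eq_zero] at this
  exact this

lemma zb_norm_sq_sum (v : HilbertBasis ℕ ℝ H) (c : ℕ → ℝ) (s : Finset ℕ) :
    ‖∑ i ∈ s, c i • v i‖ ^ 2 = ∑ i ∈ s, c i ^ 2 := by
  rw [← real_inner_self_eq_norm_sq, v.orthonormal.inner_sum]
  simp [sq]

lemma zb_split (f : ℕ → ℝ≥0∞) (k : ℕ) :
    ∑ i ∈ Finset.range k, f i + ∑' i, f (i + k) = ∑' i, f i :=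
  (HasSum.sum_range_add (ENNReal.summable.hasSum)).tsum_eq.symm

end ZBHelpers

set_option maxHeartbeats 2000000 in
/-- Zwald–Blanchard type eigenspace perturbation bound: if `A` is a positive
self-adjoint Hilbert–Schmidt operator with simple eigenvalues `lam 0 > lam 1 > ⋯`
(eigenvectors `u`), `B` is self-adjoint Hilbert–Schmidt with decreasingly ordered
eigenvalues (eigenbasis `w`), `lam (D-1) > 0`, `δ_D = (lam (D-1) - lam D)/2`, and
`‖A - B‖_HS < δ_D / 2`, then the orthogonal projections onto the spans of the top `D`
eigenvectors satisfy `‖P^D(A) - P^D(B)‖_HS ≤ ‖A - B‖_HS / δ_D`. -/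
theorem eigenspace_perturbation {H : Type*} [NormedAddCommGroup H]
    [InnerProductSpace ℝ H] [CompleteSpace H] (b : HilbertBasis ℕ ℝ H)
    (A B : H →L[ℝ] H) (hA : IsSelfAdjoint A) (hB : IsSelfAdjoint B)
    (hAHS : Summable fun i => ‖A (b i)‖ ^ 2)
    (hBHS : Summable fun i => ‖B (b i)‖ ^ 2)
    (hApos : ∀ f, 0 ≤ ⟪A f, f⟫_ℝ)
    (u : HilbertBasis ℕ ℝ H) (lam : ℕ → ℝ) (hlam : StrictAnti lam)
    (hAu : ∀ i, A (u i) = lam i • u i)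
    (w : HilbertBasis ℕ ℝ H) (mu : ℕ → ℝ) (hmu : Antitone mu)
    (hBw : ∀ i, B (w i) = mu i • w i)
    (D : ℕ) (hD : 0 < D) (hlamD : 0 < lam (D - 1))
    (δD : ℝ) (hδD : δD = (lam (D - 1) - lam D) / 2)
    (PA PB : H →L[ℝ] H)
    (hPA1 : ∀ f, PA f ∈ Submodule.span ℝ (Set.range fun i : Fin D => u (i : ℕ)))
    (hPA2 : ∀ f, ∀ g ∈ Submodule.span ℝ (Set.range fun i : Fin D => u (i : ℕ)),
      ⟪f - PA f, g⟫_ℝ = 0)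
    (hPB1 : ∀ f, PB f ∈ Submodule.span ℝ (Set.range fun i : Fin D => w (i : ℕ)))
    (hPB2 : ∀ f, ∀ g ∈ Submodule.span ℝ (Set.range fun i : Fin D => w (i : ℕ)),
      ⟪f - PB f, g⟫_ℝ = 0)
    (hclose : Real.sqrt (hsNormSq b (A - B)) < δD / 2) :
    Real.sqrt (hsNormSq b (PA - PB)) ≤ Real.sqrt (hsNormSq b (A - B)) / δD := by
  classical
  have hδpos : 0 < δD := by
    have h1 : lam D < lam (D - 1) := hlam (Nat.sub_lt hD one_pos)
    rw [hδD]; linarith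
  -- symmetry facts
  have hAsy : ∀ x y : H, ⟪A x, y⟫_ℝ = ⟪x, A y⟫_ℝ := fun x y => hA.isSymmetric x y
  have hBsy : ∀ x y : H, ⟪B x, y⟫_ℝ = ⟪x, B y⟫_ℝ := fun x y => hB.isSymmetric x y
  have hABsymm : ∀ x y, ⟪(A - B) x, y⟫_ℝ = ⟪x, (A - B) y⟫_ℝ := by
    intro x y
    simp only [ContinuousLinearMap.sub_apply, inner_sub_left, inner_sub_right, hAsy, hBsy]
  -- projection formulas
  have hPAf := zb_proj_eq u D PA hPA1 hPA2
  have hPBf := zb_proj_eq w D PB hPB1 hPB2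
  have key_sym : ∀ (v : HilbertBasis ℕ ℝ H) (P : H →L[ℝ] H),
      (∀ f, P f = ∑ i ∈ Finset.range D, ⟪f, v i⟫_ℝ • v i) →
      ∀ x y, ⟪P x, y⟫_ℝ = ⟪x, P y⟫_ℝ := by
    intro v P hP x y
    rw [hP x, hP y, sum_inner, inner_sum]
    apply Finset.sum_congr rfl
    intro i _
    rw [real_inner_smul_left, real_inner_smul_right, real_inner_comm (v i) y]
    ring
  have hPsymm : ∀ x y, ⟪(PA - PB) x, y⟫_ℝ = ⟪x, (PA - PB) y⟫_ℝ := by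
    intro x y
    simp only [ContinuousLinearMap.sub_apply, inner_sub_left, inner_sub_right]
    rw [key_sym u PA hPAf x y, key_sym w PB hPBf x y]
  -- row and column sums
  have hrow : ∀ i, ∑' j, ENNReal.ofReal (⟪u i, w j⟫_ℝ ^ 2) = 1 := by
    intro i
    rw [zb_parseval_ennreal w (u i), u.orthonormal.1 i]
    norm_num
  have hcol : ∀ j, ∑' i, ENNReal.ofReal (⟪u i, w j⟫_ℝ ^ 2) = 1 := by
    intro j
    have e : (fun i => ENNReal.ofReal (⟪u i, w j⟫_ℝ ^ 2))
        = fun i => ENNReal.ofReal (⟪w j, u i⟫_ℝ ^ 2) := by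
      funext i; rw [real_inner_comm]
    rw [e, zb_parseval_ennreal u (w j), w.orthonormal.1 j]
    norm_num
  -- corner sums
  set S1 : ℝ≥0∞ := ∑ i ∈ Finset.range D, ∑' j, ENNReal.ofReal (⟪u i, w (j + D)⟫_ℝ ^ 2)
    with hS1def
  set S2 : ℝ≥0∞ := ∑ j ∈ Finset.range D, ∑' i, ENNReal.ofReal (⟪u (i + D), w j⟫_ℝ ^ 2)
    with hS2def
  set T0 : ℝ≥0∞ := ∑ i ∈ Finset.range D, ∑ j ∈ Finset.range D,
      ENNReal.ofReal (⟪u i, w j⟫_ℝ ^ 2) with hT0def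
  have hT0S1 : T0 + S1 = D := by
    rw [hT0def, hS1def, ← Finset.sum_add_distrib]
    have e : ∀ i ∈ Finset.range D, (∑ j ∈ Finset.range D, ENNReal.ofReal (⟪u i, w j⟫_ℝ ^ 2)
        + ∑' j, ENNReal.ofReal (⟪u i, w (j + D)⟫_ℝ ^ 2)) = 1 := by
      intro i _
      rw [zb_split _ D, hrow i]
    rw [Finset.sum_congr rfl e]
    simp
  have hT0S2 : T0 + S2 = D := by
    rw [hT0def, Finset.sum_comm, hS2def, ← Finset.sum_add_distrib]
    have e : ∀ j ∈ Finset.range D, (∑ i ∈ Finset.range D, ENNReal.ofReal (⟪u i, w j⟫_ℝ ^ 2)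
        + ∑' i, ENNReal.ofReal (⟪u (i + D), w j⟫_ℝ ^ 2)) = 1 := by
      intro j _
      rw [zb_split _ D, hcol j]
    rw [Finset.sum_congr rfl e]
    simp
  have hT0ne : T0 ≠ ⊤ :=
    ne_top_of_le_ne_top (ENNReal.natCast_ne_top D) (hT0S1 ▸ le_self_add)
  have hS12 : S2 = S1 := ((ENNReal.add_right_inj hT0ne).mp (hT0S1.trans hT0S2.symm)).symm
  -- values of PB on the basis w
  have hPBlt : ∀ j, j < D → PB (w j) = w j := by
    intro j hj
    rw [hPBf (w j)]
    have e : ∀ k ∈ Finset.range D, ⟪w j, w k⟫_ℝ • w k = if j = k then w j else 0 := by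
      intro k _
      rw [orthonormal_iff_ite.mp w.orthonormal]
      split <;> rename_i h <;> simp [h]
    rw [Finset.sum_congr rfl e, Finset.sum_ite_eq (Finset.range D) j]
    simp [Finset.mem_range.mpr hj]
  have hPBge : ∀ j, PB (w (j + D)) = 0 := by
    intro j
    rw [hPBf]
    apply Finset.sum_eq_zero
    intro k hk
    rw [orthonormal_iff_ite.mp w.orthonormal]
    have hne : j + D ≠ k := by have := Finset.mem_range.mp hk; omega
    simp [hne]
  -- norm of PA x
  have hPAnorm : ∀ x : H, ENNReal.ofReal (‖PA x‖ ^ 2)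
      = ∑ i ∈ Finset.range D, ENNReal.ofReal (⟪u i, x⟫_ℝ ^ 2) := by
    intro x
    rw [hPAf x, zb_norm_sq_sum, ENNReal.ofReal_sum_of_nonneg (fun i _ => sq_nonneg _)]
    exact Finset.sum_congr rfl fun i _ => by rw [real_inner_comm]
  -- HS norm of PA - PB in the basis w
  have hEP : zbE w (PA - PB) = S2 + S1 := by
    unfold zbE
    rw [← zb_split (fun j => ENNReal.ofReal (‖(PA - PB) (w j)‖ ^ 2)) D]
    congr 1
    · rw [hS2def]
      apply Finset.sum_congr rfl
      intro j hj
      have hjD := Finset.mem_range.mp hj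
      have h1 : (PA - PB) (w j) = PA (w j) - w j := by
        rw [ContinuousLinearMap.sub_apply, hPBlt j hjD]
      have hperp : ⟪w j - PA (w j), PA (w j)⟫_ℝ = 0 := hPA2 (w j) _ (hPA1 (w j))
      have hpyth : ‖PA (w j)‖ ^ 2 + ‖PA (w j) - w j‖ ^ 2 = 1 := by
        have e : w j = (w j - PA (w j)) + PA (w j) := by abel
        have h2 : ‖w j‖ ^ 2 = ‖w j - PA (w j)‖ ^ 2
            + 2 * ⟪w j - PA (w j), PA (w j)⟫_ℝ + ‖PA (w j)‖ ^ 2 := by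
          conv_lhs => rw [e]
          exact norm_add_sq_real _ _
        rw [hperp, w.orthonormal.1 j] at h2
        have h3 : ‖PA (w j) - w j‖ = ‖w j - PA (w j)‖ := norm_sub_rev _ _
        rw [h3]
        nlinarith [h2]
      have h2 : ENNReal.ofReal (‖PA (w j)‖ ^ 2) + ENNReal.ofReal (‖(PA - PB) (w j)‖ ^ 2)
          = 1 := by
        rw [h1, ← ENNReal.ofReal_add (sq_nonneg _) (sq_nonneg _), hpyth, ENNReal.ofReal_one]
      have hsplit : ENNReal.ofReal (‖PA (w j)‖ ^ 2)
          + ∑' i, ENNReal.ofReal (⟪u (i + D), w j⟫_ℝ ^ 2) = 1 := by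
        rw [hPAnorm (w j), zb_split _ D, hcol j]
      exact (ENNReal.add_right_inj ENNReal.ofReal_ne_top).mp (h2.trans hsplit.symm)
    · rw [hS1def, ← Summable.tsum_finsetSum (fun i _ => ENNReal.summable)]
      apply tsum_congr
      intro j
      have h1 : (PA - PB) (w (j + D)) = PA (w (j + D)) := by
        rw [ContinuousLinearMap.sub_apply, hPBge j, sub_zero]
      rw [h1, hPAnorm (w (j + D))]
  -- inner products of (A - B) u i with w j
  have hinner : ∀ i j, ⟪(A - B) (u i), w j⟫_ℝ = (lam i - mu j) * ⟪u i, w j⟫_ℝ := by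
    intro i j
    rw [ContinuousLinearMap.sub_apply, inner_sub_left, hAu i, real_inner_smul_left]
    have hBij : ⟪B (u i), w j⟫_ℝ = mu j * ⟪u i, w j⟫_ℝ := by
      rw [hBsy (u i) (w j), hBw j, real_inner_smul_right]
    rw [hBij]; ring
  have hEA : zbE u (A - B) = ∑' i, ∑' j,
      ENNReal.ofReal ((lam i - mu j) ^ 2) * ENNReal.ofReal (⟪u i, w j⟫_ℝ ^ 2) := by
    rw [zbE_eq_double u w (A - B)]
    refine tsum_congr fun i => tsum_congr fun j => ?_
    rw [hinner, mul_pow, ENNReal.ofReal_mul (sq_nonneg _)]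
  -- gap constants
  set a : ℝ := max (lam (D - 1) - mu D) 0 with hadef
  set b2 : ℝ := max (mu (D - 1) - lam D) 0 with hb2def
  have ha0 : 0 ≤ a := le_max_right _ _
  have hb0 : 0 ≤ b2 := le_max_right _ _
  have hab : 2 * δD ≤ a + b2 := by
    have h1 : lam (D - 1) - mu D ≤ a := le_max_left _ _
    have h2 : mu (D - 1) - lam D ≤ b2 := le_max_left _ _
    have h3 : mu D ≤ mu (D - 1) := hmu (Nat.sub_le D 1)
    rw [hδD]
    linarith
  have hkey : 2 * δD ^ 2 ≤ a ^ 2 + b2 ^ 2 := by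
    nlinarith [sq_nonneg (a - b2), hδpos.le, hab, ha0, hb0]
  have hc1 : ∀ i, i < D → ∀ j, a ^ 2 ≤ (lam i - mu (j + D)) ^ 2 := by
    intro i hi j
    have h1 : lam (D - 1) ≤ lam i := hlam.antitone (by omega)
    have h2 : mu (j + D) ≤ mu D := hmu (by omega)
    rcases le_total (lam (D - 1) - mu D) 0 with h | h
    · rw [hadef, max_eq_right h]
      simpa using sq_nonneg _
    · rw [hadef, max_eq_left h]
      nlinarith
  have hc2 : ∀ j, j < D → ∀ i, b2 ^ 2 ≤ (lam (i + D) - mu j) ^ 2 := by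
    intro j hj i
    have h1 : lam (i + D) ≤ lam D := hlam.antitone (by omega)
    have h2 : mu (D - 1) ≤ mu j := hmu (by omega)
    rcases le_total (mu (D - 1) - lam D) 0 with h | h
    · rw [hb2def, max_eq_right h]
      simpa using sq_nonneg _
    · rw [hb2def, max_eq_left h]
      nlinarith
  -- main lower bound
  have hF1 : ENNReal.ofReal (a ^ 2) * S1 ≤ ∑ i ∈ Finset.range D, ∑' j,
      ENNReal.ofReal ((lam i - mu j) ^ 2) * ENNReal.ofReal (⟪u i, w j⟫_ℝ ^ 2) := by
    rw [hS1def, Finset.mul_sum]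
    apply Finset.sum_le_sum
    intro i hi
    have hi' := Finset.mem_range.mp hi
    calc ENNReal.ofReal (a ^ 2) * ∑' j, ENNReal.ofReal (⟪u i, w (j + D)⟫_ℝ ^ 2)
        = ∑' j, ENNReal.ofReal (a ^ 2) * ENNReal.ofReal (⟪u i, w (j + D)⟫_ℝ ^ 2) :=
          ENNReal.tsum_mul_left.symm
      _ ≤ ∑' j, ENNReal.ofReal ((lam i - mu (j + D)) ^ 2)
            * ENNReal.ofReal (⟪u i, w (j + D)⟫_ℝ ^ 2) :=
          ENNReal.tsum_le_tsum fun j =>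
            mul_le_mul_left (ENNReal.ofReal_le_ofReal (hc1 i hi' j)) _
      _ ≤ ∑' j, ENNReal.ofReal ((lam i - mu j) ^ 2) * ENNReal.ofReal (⟪u i, w j⟫_ℝ ^ 2) := by
          rw [← zb_split (fun j =>
            ENNReal.ofReal ((lam i - mu j) ^ 2) * ENNReal.ofReal (⟪u i, w j⟫_ℝ ^ 2)) D]
          exact le_add_self
  have hF2 : ENNReal.ofReal (b2 ^ 2) * S2 ≤ ∑' i, ∑' j,
      ENNReal.ofReal ((lam (i + D) - mu j) ^ 2) * ENNReal.ofReal (⟪u (i + D), w j⟫_ℝ ^ 2) := by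
    calc ENNReal.ofReal (b2 ^ 2) * S2
        = ∑ j ∈ Finset.range D, ∑' i, ENNReal.ofReal (b2 ^ 2)
            * ENNReal.ofReal (⟪u (i + D), w j⟫_ℝ ^ 2) := by
          rw [hS2def, Finset.mul_sum]
          exact Finset.sum_congr rfl fun j _ => ENNReal.tsum_mul_left.symm
      _ ≤ ∑ j ∈ Finset.range D, ∑' i, ENNReal.ofReal ((lam (i + D) - mu j) ^ 2)
            * ENNReal.ofReal (⟪u (i + D), w j⟫_ℝ ^ 2) := by
          apply Finset.sum_le_sum
          intro j hj
          exact ENNReal.tsum_le_tsum fun i =>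
            mul_le_mul_left (ENNReal.ofReal_le_ofReal (hc2 j (Finset.mem_range.mp hj) i)) _
      _ = ∑' i, ∑ j ∈ Finset.range D, ENNReal.ofReal ((lam (i + D) - mu j) ^ 2)
            * ENNReal.ofReal (⟪u (i + D), w j⟫_ℝ ^ 2) :=
          (Summable.tsum_finsetSum fun j _ => ENNReal.summable).symm
      _ ≤ ∑' i, ∑' j, ENNReal.ofReal ((lam (i + D) - mu j) ^ 2)
            * ENNReal.ofReal (⟪u (i + D), w j⟫_ℝ ^ 2) :=
          ENNReal.tsum_le_tsum fun i => ENNReal.sum_le_tsum _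
  have hbound : ENNReal.ofReal (δD ^ 2) * (S1 + S2) ≤ zbE u (A - B) := by
    calc ENNReal.ofReal (δD ^ 2) * (S1 + S2)
        = ENNReal.ofReal (δD ^ 2) * (S1 + S1) := by rw [hS12]
      _ = (2 * ENNReal.ofReal (δD ^ 2)) * S1 := by ring
      _ = ENNReal.ofReal (2 * δD ^ 2) * S1 := by
          rw [ENNReal.ofReal_mul (by norm_num : (0:ℝ) ≤ 2)]
          norm_num
      _ ≤ ENNReal.ofReal (a ^ 2 + b2 ^ 2) * S1 :=
          mul_le_mul_left (ENNReal.ofReal_le_ofReal hkey) _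
      _ = ENNReal.ofReal (a ^ 2) * S1 + ENNReal.ofReal (b2 ^ 2) * S1 := by
          rw [ENNReal.ofReal_add (sq_nonneg a) (sq_nonneg b2), add_mul]
      _ = ENNReal.ofReal (a ^ 2) * S1 + ENNReal.ofReal (b2 ^ 2) * S2 := by rw [hS12]
      _ ≤ (∑ i ∈ Finset.range D, ∑' j,
            ENNReal.ofReal ((lam i - mu j) ^ 2) * ENNReal.ofReal (⟪u i, w j⟫_ℝ ^ 2))
          + ∑' i, ∑' j, ENNReal.ofReal ((lam (i + D) - mu j) ^ 2)
            * ENNReal.ofReal (⟪u (i + D), w j⟫_ℝ ^ 2) := add_le_add hF1 hF2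
      _ = ∑' i, ∑' j, ENNReal.ofReal ((lam i - mu j) ^ 2)
            * ENNReal.ofReal (⟪u i, w j⟫_ℝ ^ 2) :=
          zb_split _ D
      _ = zbE u (A - B) := hEA.symm
  -- relate hsNormSq to zbE
  have hnonnegAB : 0 ≤ hsNormSq b (A - B) := tsum_nonneg fun i => sq_nonneg _
  have hsumAB : Summable fun i => ‖(A - B) (b i)‖ ^ 2 := by
    apply Summable.of_nonneg_of_le (fun i => sq_nonneg _) _
      ((hAHS.mul_left 2).add (hBHS.mul_left 2))
    intro i
    have h1 : ‖(A - B) (b i)‖ ≤ ‖A (b i)‖ + ‖B (b i)‖ := by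
      rw [ContinuousLinearMap.sub_apply]; exact norm_sub_le _ _
    have h0 : (0:ℝ) ≤ ‖(A - B) (b i)‖ := norm_nonneg _
    have h2 : ‖(A - B) (b i)‖ ^ 2 ≤ (‖A (b i)‖ + ‖B (b i)‖) ^ 2 := by nlinarith
    have h3 : (‖A (b i)‖ + ‖B (b i)‖) ^ 2 ≤ 2 * ‖A (b i)‖ ^ 2 + 2 * ‖B (b i)‖ ^ 2 := by
      nlinarith [sq_nonneg (‖A (b i)‖ - ‖B (b i)‖)]
    exact le_trans h2 h3
  have hofAB : ENNReal.ofReal (hsNormSq b (A - B)) = zbE b (A - B) := by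
    unfold hsNormSq zbE
    rw [ENNReal.ofReal_tsum_of_nonneg (fun i => sq_nonneg _) hsumAB]
  by_cases hsumP : Summable fun i => ‖(PA - PB) (b i)‖ ^ 2
  · have hofP : ENNReal.ofReal (hsNormSq b (PA - PB)) = zbE b (PA - PB) := by
      unfold hsNormSq zbE
      rw [ENNReal.ofReal_tsum_of_nonneg (fun i => sq_nonneg _) hsumP]
    have hchain : ENNReal.ofReal (δD ^ 2 * hsNormSq b (PA - PB))
        ≤ ENNReal.ofReal (hsNormSq b (A - B)) := by
      rw [ENNReal.ofReal_mul (sq_nonneg δD), hofP, hofAB,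
        zbE_indep _ hPsymm b w, zbE_indep _ hABsymm b u, hEP]
      calc ENNReal.ofReal (δD ^ 2) * (S2 + S1)
          = ENNReal.ofReal (δD ^ 2) * (S1 + S2) := by rw [add_comm S2 S1]
        _ ≤ zbE u (A - B) := hbound
    have hreal : δD ^ 2 * hsNormSq b (PA - PB) ≤ hsNormSq b (A - B) :=
      (ENNReal.ofReal_le_ofReal_iff hnonnegAB).mp hchain
    have hdiv : hsNormSq b (PA - PB) ≤ hsNormSq b (A - B) / δD ^ 2 := by
      rw [le_div_iff₀ (by positivity : (0:ℝ) < δD ^ 2)]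
      nlinarith [hreal]
    calc Real.sqrt (hsNormSq b (PA - PB))
        ≤ Real.sqrt (hsNormSq b (A - B) / δD ^ 2) := Real.sqrt_le_sqrt hdiv
      _ = Real.sqrt (hsNormSq b (A - B)) / δD := by
          rw [Real.sqrt_div hnonnegAB, Real.sqrt_sq hδpos.le]
  · have h0 : hsNormSq b (PA - PB) = 0 := by
      unfold hsNormSq
      exact tsum_eq_zero_of_not_summable hsumP
    rw [h0, Real.sqrt_zero]
    positivity
end

section
/- For the Gaussian kernel k(x,y) = exp(-‖x-y‖²/(2σ²)) (so κ = 1, φ(s) = e^{-s}, p = 2), if every quantized point satisfies ‖xᵢ - c_{α(i)}‖ ≤ σ/ℓ, then the MMD between the samples and their quantized versions satisfies MMD ≤ √(2(1 - exp(-1/(2ℓ²)))), and this bound tends to 0 as ℓ → ∞. -/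
/-!
Since k(x, x) = 1, every feature vector ψ x is a unit vector, so
‖ψ x - ψ c‖² = 2 (1 - k(x, c)) ≤ 2 (1 - exp (-1 / (2ℓ²))) whenever ‖x - c‖ ≤ σ / ℓ.
The MMD is the norm of the average of the differences ψ (x i) - ψ (c i), so the triangle
inequality transfers this pointwise bound to it.
-/

open Filter Finset Topology

theorem norm_average_sub_average_le {E ι : Type*} [SeminormedAddCommGroup E] [NormedSpace ℝ E]
    (s : Finset ι) (f g : ι → E) {B : ℝ} (hB : 0 ≤ B) (hfg : ∀ i ∈ s, ‖f i - g i‖ ≤ B) :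
    ‖(1 / (#s : ℝ)) • ∑ i ∈ s, f i - (1 / (#s : ℝ)) • ∑ i ∈ s, g i‖ ≤ B := by
  rw [← smul_sub, ← sum_sub_distrib, norm_smul, Real.norm_of_nonneg (by positivity)]
  calc 1 / (#s : ℝ) * ‖∑ i ∈ s, (f i - g i)‖
      ≤ 1 / (#s : ℝ) * (#s * B) := by
        gcongr
        exact (norm_sum_le _ _).trans (by simpa using sum_le_card_nsmul s _ B hfg)
    _ = (#s / #s : ℝ) * B := by ring
    _ ≤ B := mul_le_of_le_one_left hB (div_self_le_one _)

theorem norm_sub_le_sqrt_of_le_inner {H : Type*} [NormedAddCommGroup H] [InnerProductSpace ℝ H]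
    {a b : H} {m : ℝ} (ha : inner ℝ a a = 1) (hb : inner ℝ b b = 1) (hm : m ≤ inner ℝ a b) :
    ‖a - b‖ ≤ √(2 * (1 - m)) := by
  apply Real.le_sqrt_of_sq_le
  rw [norm_sub_sq_real, ← real_inner_self_eq_norm_sq, ← real_inner_self_eq_norm_sq, ha, hb]
  linarith

theorem exp_neg_one_div_le_exp_neg_sq_div {r σ ℓ : ℝ} (hℓ : 0 < ℓ) (hr : 0 ≤ r)
    (hrσ : r ≤ σ / ℓ) : Real.exp (-1 / (2 * ℓ ^ 2)) ≤ Real.exp (-r ^ 2 / (2 * σ ^ 2)) := by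
  rw [Real.exp_le_exp]
  rcases eq_or_ne σ 0 with rfl | hσ
  · -- with σ = 0 the exponent is the junk value -r² / 0 = 0
    rw [zero_pow two_ne_zero, mul_zero, div_zero]
    exact div_nonpos_of_nonpos_of_nonneg (by norm_num) (by positivity)
  · have hrℓ : r * ℓ ≤ σ := (le_div_iff₀ hℓ).1 hrσ
    rw [div_le_div_iff₀ (by positivity) (by positivity)]
    nlinarith [mul_nonneg hr hℓ.le]

theorem tendsto_sqrt_two_mul_one_sub_exp_neg_one_div_atTop :
    Tendsto (fun ℓ : ℝ => √(2 * (1 - Real.exp (-1 / (2 * ℓ ^ 2))))) atTop (𝓝 0) := by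
  have hexponent : Tendsto (fun ℓ : ℝ => -1 / (2 * ℓ ^ 2)) atTop (𝓝 0) :=
    tendsto_const_nhds.div_atTop ((tendsto_pow_atTop two_ne_zero).const_mul_atTop two_pos)
  have hcont : Continuous fun t : ℝ => √(2 * (1 - Real.exp t)) := by fun_prop
  simpa only [Function.comp_def, Real.exp_zero, sub_self, mul_zero, Real.sqrt_zero] using
    (hcont.tendsto 0).comp hexponent

theorem gaussian_mmd_quantization_bound_general (d n : ℕ) (σ : ℝ)
    {H : Type*} [NormedAddCommGroup H] [InnerProductSpace ℝ H]
    (k : EuclideanSpace ℝ (Fin d) → EuclideanSpace ℝ (Fin d) → ℝ)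
    (hk : ∀ x y, k x y = Real.exp (-‖x - y‖ ^ 2 / (2 * σ ^ 2)))
    (ψ : EuclideanSpace ℝ (Fin d) → H)
    (hrepr : ∀ x y, inner ℝ (ψ x) (ψ y) = k x y) :
    (∀ (ℓ : ℝ), 0 < ℓ →
      ∀ (x c : Fin n → EuclideanSpace ℝ (Fin d)),
        (∀ i, ‖x i - c i‖ ≤ σ / ℓ) →
        ‖(1 / (n : ℝ)) • ∑ i, ψ (x i) - (1 / (n : ℝ)) • ∑ i, ψ (c i)‖ ≤
          Real.sqrt (2 * (1 - Real.exp (-1 / (2 * ℓ ^ 2))))) ∧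
    Filter.Tendsto (fun ℓ : ℝ => Real.sqrt (2 * (1 - Real.exp (-1 / (2 * ℓ ^ 2)))))
      Filter.atTop (nhds 0) := by
  refine ⟨fun ℓ hℓ x c hxc => ?_, tendsto_sqrt_two_mul_one_sub_exp_neg_one_div_atTop⟩
  have hunit : ∀ y, inner ℝ (ψ y) (ψ y) = 1 := fun y => by rw [hrepr, hk, sub_self, norm_zero]; simp
  have hpoint : ∀ i ∈ univ, ‖ψ (x i) - ψ (c i)‖ ≤ √(2 * (1 - Real.exp (-1 / (2 * ℓ ^ 2)))) :=
    fun i _ => norm_sub_le_sqrt_of_le_inner (hunit _) (hunit _) <| by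
      rw [hrepr, hk]
      exact exp_neg_one_div_le_exp_neg_sq_div hℓ (norm_nonneg _) (hxc i)
  simpa only [card_fin] using
    norm_average_sub_average_le univ (fun i => ψ (x i)) (fun i => ψ (c i)) (Real.sqrt_nonneg _) hpoint

/-- Specialization of the MMD worst-case bound to the Gaussian kernel, and the
vanishing of the bound as ℓ → ∞. -/
theorem gaussian_mmd_quantization_bound (d n : ℕ) (σ : ℝ) (hσ : 0 < σ)
    {H : Type*} [NormedAddCommGroup H] [InnerProductSpace ℝ H]
    (k : EuclideanSpace ℝ (Fin d) → EuclideanSpace ℝ (Fin d) → ℝ)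
    (hk : ∀ x y, k x y = Real.exp (-‖x - y‖ ^ 2 / (2 * σ ^ 2)))
    (ψ : EuclideanSpace ℝ (Fin d) → H)
    (hrepr : ∀ x y, inner ℝ (ψ x) (ψ y) = k x y) :
    (∀ (ℓ : ℝ), 0 < ℓ →
      ∀ (x c : Fin n → EuclideanSpace ℝ (Fin d)),
        (∀ i, ‖x i - c i‖ ≤ σ / ℓ) →
        ‖(1 / (n : ℝ)) • ∑ i, ψ (x i) - (1 / (n : ℝ)) • ∑ i, ψ (c i)‖ ≤
          Real.sqrt (2 * (1 - Real.exp (-1 / (2 * ℓ ^ 2))))) ∧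
    Filter.Tendsto (fun ℓ : ℝ => Real.sqrt (2 * (1 - Real.exp (-1 / (2 * ℓ ^ 2)))))
      Filter.atTop (nhds 0) :=
  gaussian_mmd_quantization_bound_general d n σ k hk ψ hrepr
end
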